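/- arXiv:2002.00352 — 4 statements merged into one kernel-verified Lean document; each statement's English description precedes it below -/
import Mathlib

section
/- Let M, L be positive integers, let S_1, …, S_L ⊆ Fin M be a hierarchical (laminar) family with integer capacities C_1, …, C_L ≥ 1, and let p̃ : Fin M → ℝ. Then the greedy output x* (as defined in the context) is feasible, i.e. ∑_{j ∈ S_l} x*_j ≤ C_l for every l ∈ {1,…,L}, and it is optimal: for every x : Fin M → {0,1} with ∑_{j ∈ S_l} x_j ≤ C_l for every l, one has ∑_{j=1}^{M} p̃_j x_j ≤ ∑_{j=1}^{M} p̃_j x*_j. (Proposition 1: the greedy algorithm optimally solves the per-group integer programming subproblem with hierarchical local constraints.) -/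
attribute [local instance] Classical.propDecidable

/-- One step of the greedy algorithm: from the current candidate set `A`, keep all items
outside `S`, and inside `S` keep only the (at most) `C` smallest items of `A ∩ S` with
respect to the tie-broken order `r` (an item is kept iff fewer than `C` items of `A ∩ S`
precede it under `r`). -/
noncomputable def greedyStep {M : ℕ} (r : Fin M → Fin M → Prop) (C : ℕ)
    (S A : Finset (Fin M)) : Finset (Fin M) :=
  (A \ S) ∪ (A ∩ S).filter (fun j => ((A ∩ S).filter (fun j' => r j' j)).card < C)

/-- The greedy iterates: `A_0 = {j : 0 < p j}` and `A_{l+1} = greedyStep r (C l) (S l) A_l`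
for `l < L` (indices beyond `L` leave the set unchanged). -/
noncomputable def greedySets {M L : ℕ} (r : Fin M → Fin M → Prop)
    (S : Fin L → Finset (Fin M)) (C : Fin L → ℕ) (p : Fin M → ℝ) : ℕ → Finset (Fin M)
  | 0 => Finset.univ.filter (fun j => 0 < p j)
  | n + 1 =>
    if h : n < L then
      greedyStep r (C ⟨n, h⟩) (S ⟨n, h⟩) (greedySets r S C p n)
    else greedySets r S C p n

/-- The greedy output `x*`: the 0/1 indicator (as a real-valued function) of the final
greedy set `A_L`. -/
noncomputable def greedyOutput {M L : ℕ} (r : Fin M → Fin M → Prop)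
    (S : Fin L → Finset (Fin M)) (C : Fin L → ℕ) (p : Fin M → ℝ) : Fin M → ℝ :=
  fun j => if j ∈ greedySets r S C p L then 1 else 0

/-! Feasibility: step `l` keeps at most `C l` elements of `A ∩ S l`, and later steps only
shrink `A`. Optimality is an exchange argument: by induction on `n`, every feasible `B` can
be replaced by some `B' ⊆ A_n` of no smaller profit that still satisfies the constraints of all
`S l` with `l ≥ n`. At step `n`, replace `B' ∩ S n` by the equally many `r`-first elements of
`A_n ∩ S n`, whose profits are no smaller. By laminarity and the order of the sets, every later
`S l` either contains `S n`, so its count is unchanged, or is disjoint from it. -/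

open Finset

section TopSet

variable {α : Type*} (r : α → α → Prop)

noncomputable def rankIn (V : Finset α) (j : α) : ℕ := #(V.filter (fun j' => r j' j))

/-- The set `T_l` of the greedy step: the first `min k #V` elements of `V` under `r`. -/
noncomputable def topSet (k : ℕ) (V : Finset α) : Finset α :=
  V.filter (fun j => rankIn r V j < k)

theorem topSet_subset (k : ℕ) (V : Finset α) : topSet r k V ⊆ V := filter_subset _ _

theorem topSet_mono {k k' : ℕ} (h : k ≤ k') (V : Finset α) : topSet r k V ⊆ topSet r k' V :=
  monotone_filter_right _ fun _ _ hj => hj.trans_le h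

variable [IsStrictTotalOrder α r]

theorem rankIn_lt_rankIn {V : Finset α} {j j' : α} (hj' : j' ∈ V) (h : r j' j) :
    rankIn r V j' < rankIn r V j := by
  refine card_lt_card ⟨monotone_filter_right _ fun _ _ ha => _root_.trans ha h, fun hsub => ?_⟩
  exact irrefl j' (mem_filter.1 (hsub (mem_filter.2 ⟨hj', h⟩))).2

theorem rankIn_injOn (V : Finset α) : Set.InjOn (rankIn r V) V := by
  intro a ha b hb hab
  rcases trichotomous_of r a b with h | h | h
  · exact absurd hab (rankIn_lt_rankIn r ha h).ne
  · exact h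
  · exact absurd hab (rankIn_lt_rankIn r hb h).ne'

theorem rankIn_lt_card {V : Finset α} {j : α} (hj : j ∈ V) : rankIn r V j < #V :=
  card_lt_card ⟨filter_subset _ _, fun hsub => irrefl j (mem_filter.1 (hsub hj)).2⟩

theorem image_rankIn (V : Finset α) : V.image (rankIn r V) = range #V := by
  refine eq_of_subset_of_card_le (fun k hk => ?_) ?_
  · obtain ⟨j, hj, rfl⟩ := mem_image.1 hk
    exact mem_range.2 (rankIn_lt_card r hj)
  · rw [card_range, card_image_of_injOn (rankIn_injOn r V)]

theorem card_topSet (k : ℕ) (V : Finset α) : #(topSet r k V) = min k #V := by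
  have himage : (topSet r k V).image (rankIn r V) = range (min k #V) := by
    ext i
    simp only [topSet, mem_image, mem_filter, mem_range, lt_min_iff]
    constructor
    · rintro ⟨j, ⟨hj, hjk⟩, rfl⟩
      exact ⟨hjk, rankIn_lt_card r hj⟩
    · rintro ⟨hik, hiV⟩
      obtain ⟨j, hj, rfl⟩ := mem_image.1 ((image_rankIn r V).symm ▸ mem_range.2 hiV)
      exact ⟨j, ⟨hj, hik⟩, rfl⟩
  rw [← card_range (min k #V), ← himage,
    card_image_of_injOn ((rankIn_injOn r V).mono (topSet_subset r k V))]

theorem rel_of_mem_topSet {k : ℕ} {V : Finset α} {t w : α} (ht : t ∈ topSet r k V)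
    (hw : w ∈ V) (hwt : w ∉ topSet r k V) : r t w := by
  rcases trichotomous_of r t w with h | rfl | h
  · exact h
  · exact absurd ht hwt
  · exact absurd (mem_filter.2 ⟨hw, (rankIn_lt_rankIn r hw h).trans (mem_filter.1 ht).2⟩) hwt

end TopSet

theorem sum_le_sum_of_card_eq_of_forall_le {ι β : Type*} [AddCommMonoid β] [LinearOrder β]
    [IsOrderedAddMonoid β] {X Y : Finset ι} (f : ι → β) (hcard : #X = #Y)
    (hle : ∀ x ∈ X, ∀ y ∈ Y, f x ≤ f y) : ∑ x ∈ X, f x ≤ ∑ y ∈ Y, f y := by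
  rcases Y.eq_empty_or_nonempty with rfl | hY
  · rw [card_empty, card_eq_zero] at hcard
    simp [hcard]
  · calc ∑ x ∈ X, f x ≤ #X • Y.inf' hY f :=
          sum_le_card_nsmul _ _ _ fun x hx => le_inf' hY f fun y hy => hle x hx y hy
      _ = #Y • Y.inf' hY f := by rw [hcard]
      _ ≤ ∑ y ∈ Y, f y := card_nsmul_le_sum _ _ _ fun y hy => inf'_le f hy

theorem sum_le_sum_topSet {α β : Type*} (r : α → α → Prop) [IsStrictTotalOrder α r]
    [AddCommMonoid β] [LinearOrder β] [IsOrderedAddMonoid β] (p : α → β)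
    (hp : ∀ j j', p j > p j' → r j j') {V W : Finset α} (hWV : W ⊆ V) :
    ∑ j ∈ W, p j ≤ ∑ j ∈ topSet r #W V, p j := by
  set T := topSet r #W V
  have hcard : #W = #T := by rw [card_topSet, min_eq_left (card_le_card hWV)]
  have hsdiff : ∑ j ∈ W \ T, p j ≤ ∑ j ∈ T \ W, p j := by
    refine sum_le_sum_of_card_eq_of_forall_le p (card_sdiff_comm hcard) fun w hw t ht => ?_
    rw [mem_sdiff] at hw ht
    have hrel := rel_of_mem_topSet r ht.1 (hWV hw.1) hw.2
    exact not_lt.1 fun hlt => asymm hrel (hp w t hlt)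
  rw [← sum_inter_add_sum_sdiff W T, ← sum_inter_add_sum_sdiff T W, inter_comm]
  gcongr

theorem subset_or_disjoint_of_le {ι α : Type*} [LinearOrder ι] [DecidableEq α]
    {S : ι → Finset α}
    (hlaminar : ∀ l l', (S l ∩ S l').Nonempty → S l ⊆ S l' ∨ S l' ⊆ S l)
    (horder : ∀ a b, S a ⊂ S b → a < b) {a b : ι} (hab : a ≤ b) :
    S a ⊆ S b ∨ Disjoint (S a) (S b) := by
  rcases (S a ∩ S b).eq_empty_or_nonempty with h | h
  · exact Or.inr (disjoint_iff_inter_eq_empty.2 h)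
  · left
    refine (hlaminar a b h).elim id fun hba => ?_
    by_contra hab'
    exact (horder b a (hba.ssubset_of_not_subset hab')).not_ge hab

section Greedy

variable {M L : ℕ} (r : Fin M → Fin M → Prop) (S : Fin L → Finset (Fin M))
  (C : Fin L → ℕ) (p : Fin M → ℝ)

theorem greedyStep_eq (c : ℕ) (s A : Finset (Fin M)) :
    greedyStep r c s A = (A \ s) ∪ topSet r c (A ∩ s) := rfl

theorem greedyStep_subset (c : ℕ) (s A : Finset (Fin M)) : greedyStep r c s A ⊆ A :=
  union_subset sdiff_subset ((topSet_subset r c _).trans inter_subset_left)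

theorem greedyStep_inter (c : ℕ) (s A : Finset (Fin M)) :
    greedyStep r c s A ∩ s = topSet r c (A ∩ s) := by
  rw [greedyStep_eq, union_inter_distrib_right, sdiff_inter_self, empty_union,
    inter_eq_left.2 ((topSet_subset r c _).trans inter_subset_right)]

theorem greedySets_succ (l : Fin L) :
    greedySets r S C p (l + 1) = greedyStep r (C l) (S l) (greedySets r S C p l) := by
  rw [greedySets, dif_pos l.2]

theorem greedySets_antitone : Antitone (greedySets r S C p) := by
  refine antitone_nat_of_succ_le fun n => ?_
  rw [greedySets]
  split
  · exact greedyStep_subset r _ _ _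
  · exact subset_rfl

theorem pos_of_mem_greedySets {n : ℕ} {j : Fin M} (hj : j ∈ greedySets r S C p n) :
    0 < p j := by
  have hj0 := greedySets_antitone r S C p (Nat.zero_le n) hj
  rw [greedySets] at hj0
  exact (mem_filter.1 hj0).2

variable [IsStrictTotalOrder (Fin M) r]

theorem card_greedySets_inter_le (l : Fin L) : #(greedySets r S C p L ∩ S l) ≤ C l :=
  calc #(greedySets r S C p L ∩ S l) ≤ #(greedySets r S C p (l + 1) ∩ S l) :=
        card_le_card (inter_subset_inter_right (greedySets_antitone r S C p l.2))
    _ = #(topSet r (C l) (greedySets r S C p l ∩ S l)) := by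
        rw [greedySets_succ, greedyStep_inter]
    _ ≤ C l := (card_topSet r _ _).trans_le (min_le_left _ _)

theorem exists_subset_greedyStep (hp : ∀ j j', p j > p j' → r j j') {c : ℕ}
    {s A B : Finset (Fin M)} (hBA : B ⊆ A) (hBc : #(B ∩ s) ≤ c) :
    ∃ B' ⊆ greedyStep r c s A, ∑ j ∈ B, p j ≤ ∑ j ∈ B', p j ∧
      ∀ t, s ⊆ t ∨ Disjoint s t → #(B' ∩ t) ≤ #(B ∩ t) := by
  set T := topSet r #(B ∩ s) (A ∩ s)
  have hTs : T ⊆ s := (topSet_subset r _ _).trans inter_subset_right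
  refine ⟨(B \ s) ∪ T, union_subset_union (sdiff_subset_sdiff hBA subset_rfl)
    (topSet_mono r hBc _), ?_, fun t ht => ?_⟩
  · rw [sum_union (disjoint_sdiff_self_left.mono_right hTs), ← sum_inter_add_sum_sdiff B s,
      add_comm]
    exact add_le_add_right (sum_le_sum_topSet r p hp (inter_subset_inter_right hBA)) _
  · rcases ht with hst | hst
    · calc #(((B \ s) ∪ T) ∩ t) ≤ #((B \ s) ∩ t ∪ T) := by
            rw [union_inter_distrib_right]
            exact card_le_card (union_subset_union subset_rfl inter_subset_left)
        _ ≤ #((B \ s) ∩ t) + #T := card_union_le _ _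
        _ = #((B ∩ t) \ s) + #((B ∩ t) ∩ s) := by
            rw [card_topSet, min_eq_left (card_le_card (inter_subset_inter_right hBA)),
              sdiff_inter_right_comm, inter_assoc, inter_eq_right.2 hst]
        _ = #(B ∩ t) := card_sdiff_add_card_inter _ _
    · refine card_le_card ?_
      rw [union_inter_distrib_right, disjoint_iff_inter_eq_empty.1 (hst.mono_left hTs),
        union_empty]
      exact inter_subset_inter_right sdiff_subset

theorem exists_subset_greedySets
    (hlaminar : ∀ l l' : Fin L, (S l ∩ S l').Nonempty → S l ⊆ S l' ∨ S l' ⊆ S l)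
    (horder : ∀ a b : Fin L, S a ⊂ S b → a < b) (hp : ∀ j j', p j > p j' → r j j')
    {B : Finset (Fin M)} (hB : ∀ l, #(B ∩ S l) ≤ C l) :
    ∀ n ≤ L, ∃ B' ⊆ greedySets r S C p n, ∑ j ∈ B, p j ≤ ∑ j ∈ B', p j ∧
      ∀ l : Fin L, n ≤ l → #(B' ∩ S l) ≤ C l
  | 0, _ => by
    refine ⟨B.filter (0 < p ·), ?_, ?_, fun l _ => ?_⟩
    · rw [greedySets]
      exact filter_subset_filter _ (subset_univ B)
    · rw [← sum_filter_add_sum_filter_not B (0 < p ·)]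
      exact add_le_of_nonpos_right (sum_nonpos fun j hj => not_lt.1 (mem_filter.1 hj).2)
    · exact (card_le_card (inter_subset_inter_right (filter_subset _ B))).trans (hB l)
  | n + 1, hn => by
    obtain ⟨B', hB'A, hsum, hfeas⟩ :=
      exists_subset_greedySets hlaminar horder hp hB n (by omega)
    let ln : Fin L := ⟨n, hn⟩
    obtain ⟨B'', hB''A, hsum', hcard⟩ := exists_subset_greedyStep r p hp hB'A (hfeas ln le_rfl)
    refine ⟨B'', greedySets_succ r S C p ln ▸ hB''A, hsum.trans hsum', fun l hl => ?_⟩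
    have hnl : ln ≤ l := Fin.le_iff_val_le_val.2 (Nat.le_of_succ_le hl)
    exact (hcard _ (subset_or_disjoint_of_le hlaminar horder hnl)).trans (hfeas l (by omega))

theorem sum_le_sum_greedySets
    (hlaminar : ∀ l l' : Fin L, (S l ∩ S l').Nonempty → S l ⊆ S l' ∨ S l' ⊆ S l)
    (horder : ∀ a b : Fin L, S a ⊂ S b → a < b) (hp : ∀ j j', p j > p j' → r j j')
    {B : Finset (Fin M)} (hB : ∀ l, #(B ∩ S l) ≤ C l) :
    ∑ j ∈ B, p j ≤ ∑ j ∈ greedySets r S C p L, p j := by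
  obtain ⟨B', hB'A, hsum, -⟩ := exists_subset_greedySets r S C p hlaminar horder hp hB L le_rfl
  exact hsum.trans
    (sum_le_sum_of_subset_of_nonneg hB'A fun j hj _ => (pos_of_mem_greedySets r S C p hj).le)

end Greedy

theorem sum_boole_mem {α R : Type*} [DecidableEq α] [AddCommMonoidWithOne R]
    (s B : Finset α) : ∑ j ∈ s, (if j ∈ B then (1 : R) else 0) = #(B ∩ s) := by
  rw [sum_boole, filter_mem_eq_inter, inter_comm]

theorem sum_mul_boole_mem {α R : Type*} [Fintype α] [DecidableEq α] [NonAssocSemiring R]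
    (p : α → R) (B : Finset α) :
    ∑ j, p j * (if j ∈ B then 1 else 0) = ∑ j ∈ B, p j := by
  simp only [mul_ite, mul_one, mul_zero, sum_ite_mem, univ_inter]

theorem eq_boole_mem_of_zero_or_one {α R : Type*} [Fintype α] [DecidableEq α] [Zero R] [One R]
    [NeZero (1 : R)] {x : α → R} (hx : ∀ j, x j = 0 ∨ x j = 1) :
    x = fun j => if j ∈ univ.filter (x · = 1) then 1 else 0 := by
  funext j
  rcases hx j with h | h <;> simp [h]

theorem greedy_feasible_and_optimal_general
    {M L : ℕ}
    (S : Fin L → Finset (Fin M)) (C : Fin L → ℕ)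
    (hlaminar : ∀ l l' : Fin L, (S l ∩ S l').Nonempty → S l ⊆ S l' ∨ S l' ⊆ S l)
    (horder : ∀ a b : Fin L, S a ⊂ S b → a < b)
    (p : Fin M → ℝ)
    (r : Fin M → Fin M → Prop) (hr : IsStrictTotalOrder (Fin M) r)
    (hrefine : ∀ j j' : Fin M, p j > p j' → r j j') :
    (∀ l : Fin L, ∑ j ∈ S l, greedyOutput r S C p j ≤ (C l : ℝ)) ∧
    (∀ x : Fin M → ℝ, (∀ j, x j = 0 ∨ x j = 1) →
      (∀ l : Fin L, ∑ j ∈ S l, x j ≤ (C l : ℝ)) →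
      ∑ j, p j * x j ≤ ∑ j, p j * greedyOutput r S C p j) := by
  have := hr
  refine ⟨fun l => ?_, fun x hx hfeas => ?_⟩
  · simp only [greedyOutput, sum_boole_mem]
    exact_mod_cast card_greedySets_inter_le r S C p l
  · rw [eq_boole_mem_of_zero_or_one hx] at hfeas ⊢
    simp only [greedyOutput, sum_boole_mem, sum_mul_boole_mem, Nat.cast_le] at hfeas ⊢
    exact sum_le_sum_greedySets r S C p hlaminar horder hrefine hfeas

/-- **Proposition 1.** For a hierarchical (laminar) family of local constraints, listed in a
linear order extending strict inclusion, with capacities `C l ≥ 1`, the greedy output `x*` is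
feasible for all local constraints and maximizes `∑ j, p̃ j * x j` over all binary assignments
satisfying the local constraints. -/
theorem greedy_feasible_and_optimal
    {M L : ℕ} (hM : 0 < M) (hL : 0 < L)
    (S : Fin L → Finset (Fin M)) (C : Fin L → ℕ) (hC : ∀ l, 1 ≤ C l)
    (hlaminar : ∀ l l' : Fin L, (S l ∩ S l').Nonempty → S l ⊆ S l' ∨ S l' ⊆ S l)
    (horder : ∀ a b : Fin L, S a ⊂ S b → a < b)
    (p : Fin M → ℝ)
    (r : Fin M → Fin M → Prop) (hr : IsStrictTotalOrder (Fin M) r)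
    (hrefine : ∀ j j' : Fin M, p j > p j' → r j j') :
    (∀ l : Fin L, ∑ j ∈ S l, greedyOutput r S C p j ≤ (C l : ℝ)) ∧
    (∀ x : Fin M → ℝ, (∀ j, x j = 0 ∨ x j = 1) →
      (∀ l : Fin L, ∑ j ∈ S l, x j ≤ (C l : ℝ)) →
      ∑ j, p j * x j ≤ ∑ j, p j * greedyOutput r S C p j) :=
  greedy_feasible_and_optimal_general S C hlaminar horder p r hr hrefine
end

section
/- Optimality for perturbed budgets. Let λ : Fin K → ℝ with λ_k ≥ 0 for all k, and let x* be a locally feasible binary assignment maximizing the Lagrangian L(·, λ) over all locally feasible binary assignments. Let δ : Fin K → ℝ with δ_k ≥ 0 for all k and δ_k = 0 whenever λ_k > 0. Then x* is optimal for the knapsack problem with perturbed budgets B'_k = ∑_{i,j} b_{i,j,k} x*_{i,j} + δ_k: for every locally feasible binary assignment x with ∑_{i,j} b_{i,j,k} x_{i,j} ≤ B'_k for every k, one has ∑_{i,j} p_{i,j} x_{i,j} ≤ ∑_{i,j} p_{i,j} x*_{i,j}. -/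
/-- The Lagrangian of the knapsack problem:
`L(x, λ) = ∑ i j, p i j * x i j − ∑ k, λ k * (∑ i j, b i j k * x i j − B k)`. -/
noncomputable def knapsackLagrangian {N M K : ℕ}
    (p : Fin N → Fin M → ℝ) (b : Fin N → Fin M → Fin K → ℝ) (B : Fin K → ℝ)
    (lam : Fin K → ℝ) (x : Fin N → Fin M → ℝ) : ℝ :=
  ∑ i, ∑ j, p i j * x i j - ∑ k, lam k * ((∑ i, ∑ j, b i j k * x i j) - B k)

/-- **Optimality for perturbed budgets.** If `λ ≥ 0` and `x*` maximizes the Lagrangian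
`L(·, λ)` over locally feasible binary assignments, then for any `δ ≥ 0` with `δ k = 0`
whenever `λ k > 0`, `x*` is optimal for the knapsack problem whose budgets are replaced by
`B' k = ∑ i j, b i j k * x* i j + δ k`. -/
theorem optimality_perturbed_budgets
    {N M K L : ℕ} (hN : 0 < N) (hM : 0 < M) (hK : 0 < K) (hL : 0 < L)
    (p : Fin N → Fin M → ℝ) (hp : ∀ i j, 0 ≤ p i j)
    (b : Fin N → Fin M → Fin K → ℝ) (hb : ∀ i j k, 0 ≤ b i j k)
    (B : Fin K → ℝ) (hB : ∀ k, 0 < B k)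
    (S : Fin L → Finset (Fin M)) (C : Fin L → ℝ) (hC : ∀ l, 0 < C l)
    (lam : Fin K → ℝ) (hlam : ∀ k, 0 ≤ lam k)
    (xs : Fin N → Fin M → ℝ)
    (hxsbin : ∀ i j, xs i j = 0 ∨ xs i j = 1)
    (hxsloc : ∀ (i : Fin N) (l : Fin L), ∑ j ∈ S l, xs i j ≤ C l)
    (hmax : ∀ x : Fin N → Fin M → ℝ, (∀ i j, x i j = 0 ∨ x i j = 1) →
      (∀ (i : Fin N) (l : Fin L), ∑ j ∈ S l, x i j ≤ C l) →
      knapsackLagrangian p b B lam x ≤ knapsackLagrangian p b B lam xs)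
    (δ : Fin K → ℝ) (hδ : ∀ k, 0 ≤ δ k) (hδ0 : ∀ k, 0 < lam k → δ k = 0)
    (B' : Fin K → ℝ) (hB' : ∀ k, B' k = (∑ i, ∑ j, b i j k * xs i j) + δ k) :
    ∀ x : Fin N → Fin M → ℝ, (∀ i j, x i j = 0 ∨ x i j = 1) →
      (∀ (i : Fin N) (l : Fin L), ∑ j ∈ S l, x i j ≤ C l) →
      (∀ k : Fin K, ∑ i, ∑ j, b i j k * x i j ≤ B' k) →
      ∑ i, ∑ j, p i j * x i j ≤ ∑ i, ∑ j, p i j * xs i j := by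
  intro x hxbin hxloc hxbud
  have hL := hmax x hxbin hxloc
  unfold knapsackLagrangian at hL
  have hterm : ∀ k, lam k * ((∑ i, ∑ j, b i j k * x i j) - (∑ i, ∑ j, b i j k * xs i j)) ≤ 0 := by
    intro k
    rcases lt_or_eq_of_le (hlam k) with h | h
    · have hd := hδ0 k h
      have := hxbud k
      rw [hB' k, hd, add_zero] at this
      exact mul_nonpos_of_nonneg_of_nonpos (le_of_lt h) (by linarith)
    · rw [← h, zero_mul]
  have hsum : ∑ k, lam k * ((∑ i, ∑ j, b i j k * x i j) - (∑ i, ∑ j, b i j k * xs i j)) ≤ 0 :=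
    Finset.sum_nonpos fun k _ => hterm k
  have expand : ∑ k, lam k * ((∑ i, ∑ j, b i j k * x i j) - (∑ i, ∑ j, b i j k * xs i j))
      = (∑ k, lam k * ((∑ i, ∑ j, b i j k * x i j) - B k))
        - ∑ k, lam k * ((∑ i, ∑ j, b i j k * xs i j) - B k) := by
    rw [← Finset.sum_sub_distrib]
    exact Finset.sum_congr rfl fun k _ => by ring
  rw [expand] at hsum
  linarith
end

section
/- Integrality gap for a single knapsack constraint. Let n ≥ 1, c, w : Fin n → ℝ with c_j ≥ 0 and w_j ≥ 0 for all j, and B ≥ 0. Then for every fractional assignment x : Fin n → ℝ with 0 ≤ x_j ≤ 1 for all j and ∑_{j} w_j x_j ≤ B, there exists a binary assignment y : Fin n → {0,1} with ∑_{j} w_j y_j ≤ B and ∑_{j} c_j y_j ≥ ∑_{j} c_j x_j − max_j c_j. Consequently, in the single-global-constraint case (K = 1) the optimal integer profit is at most max_j c_j below the optimal fractional (LP-relaxation) profit. -/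
open Finset

private noncomputable def frSet {n : ℕ} (x : Fin n → ℝ) : Finset (Fin n) :=
  Finset.univ.filter (fun l => x l ≠ 0 ∧ x l ≠ 1)

private lemma mem_frSet {n : ℕ} {x : Fin n → ℝ} {l : Fin n} :
    l ∈ frSet x ↔ x l ≠ 0 ∧ x l ≠ 1 := by
  simp [frSet]

private lemma sum_mul_update {n : ℕ} (f x : Fin n → ℝ) (i : Fin n) (v : ℝ) :
    ∑ j, f j * Function.update x i v j = (∑ j, f j * x j) + f i * (v - x i) := by
  have h : ∀ j, f j * Function.update x i v j
      = f j * x j + (if j = i then f i * (v - x i) else 0) := by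
    intro j
    by_cases h : j = i
    · subst h; simp; ring
    · simp [Function.update_of_ne h, h]
  rw [Finset.sum_congr rfl (fun j _ => h j), Finset.sum_add_distrib,
    Finset.sum_ite_eq' Finset.univ i (fun _ => f i * (v - x i))]
  simp

/-- Exchange step: two fractional coordinates with positive weights, profit density
condition `c j * w i ≤ c i * w j`. Produces a new point with same weight, no smaller
profit, and fractional set strictly inside (missing `i` or `j`). -/
private lemma exchange_step {n : ℕ} (c w : Fin n → ℝ) (hc : ∀ j, 0 ≤ c j)
    (x : Fin n → ℝ) (hx0 : ∀ j, 0 ≤ x j) (hx1 : ∀ j, x j ≤ 1)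
    (i j : Fin n) (hij : i ≠ j)
    (hxi : x i ≠ 0 ∧ x i ≠ 1) (hxj : x j ≠ 0 ∧ x j ≠ 1)
    (hwi : 0 < w i) (hwj : 0 < w j) (hd : c j * w i ≤ c i * w j) :
    ∃ x' : Fin n → ℝ, (∀ l, 0 ≤ x' l) ∧ (∀ l, x' l ≤ 1) ∧
      (∑ l, w l * x' l = ∑ l, w l * x l) ∧ (∑ l, c l * x l ≤ ∑ l, c l * x' l) ∧
      (frSet x' ⊆ (frSet x).erase i ∨ frSet x' ⊆ (frSet x).erase j) := by
  set t : ℝ := min ((1 - x i) / w j) (x j / w i) with ht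
  have ht0 : 0 ≤ t := le_min (div_nonneg (by linarith [hx1 i]) hwj.le)
    (div_nonneg (hx0 j) hwi.le)
  have hti : t * w j ≤ 1 - x i := by
    have := min_le_left ((1 - x i) / w j) (x j / w i)
    calc t * w j ≤ ((1 - x i) / w j) * w j := by nlinarith
    _ = 1 - x i := by field_simp
  have htj : t * w i ≤ x j := by
    have := min_le_right ((1 - x i) / w j) (x j / w i)
    calc t * w i ≤ (x j / w i) * w i := by nlinarith
    _ = x j := by field_simp
  set x' : Fin n → ℝ := Function.update (Function.update x j (x j - t * w i)) i (x i + t * w j)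
    with hx'
  have hx'i : x' i = x i + t * w j := by simp [hx']
  have hx'j : x' j = x j - t * w i := by
    simp [hx', Function.update_of_ne (Ne.symm hij)]
  have hx'l : ∀ l, l ≠ i → l ≠ j → x' l = x l := by
    intro l hli hlj
    simp [hx', Function.update_of_ne hli, Function.update_of_ne hlj]
  have hb0 : ∀ l, 0 ≤ x' l := by
    intro l
    by_cases h1 : l = i
    · rw [h1, hx'i]; nlinarith [hx0 i, mul_nonneg ht0 hwj.le]
    by_cases h2 : l = j
    · rw [h2, hx'j]; linarith
    · rw [hx'l l h1 h2]; exact hx0 l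
  have hb1 : ∀ l, x' l ≤ 1 := by
    intro l
    by_cases h1 : l = i
    · rw [h1, hx'i]; linarith
    by_cases h2 : l = j
    · rw [h2, hx'j]; nlinarith [hx1 j, mul_nonneg ht0 hwi.le]
    · rw [hx'l l h1 h2]; exact hx1 l
  have hsum : ∀ f : Fin n → ℝ, ∑ l, f l * x' l
      = (∑ l, f l * x l) + f j * (-(t * w i)) + f i * (t * w j) := by
    intro f
    rw [hx', sum_mul_update, sum_mul_update]
    rw [Function.update_of_ne hij]
    ring
  have hweq : ∑ l, w l * x' l = ∑ l, w l * x l := by rw [hsum w]; ring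
  have hceq : ∑ l, c l * x l ≤ ∑ l, c l * x' l := by
    rw [hsum c]
    nlinarith [mul_nonneg ht0 (sub_nonneg.mpr hd)]
  refine ⟨x', hb0, hb1, hweq, hceq, ?_⟩
  rcases min_cases ((1 - x i) / w j) (x j / w i) with ⟨he, _⟩ | ⟨he, _⟩
  · -- t = (1 - x i)/w j, so x' i = 1
    left
    have hxi1 : x' i = 1 := by
      rw [hx'i, ← ht] at *
      rw [ht, he, div_mul_cancel₀ _ hwj.ne']
      ring
    intro l hl
    rw [mem_frSet] at hl
    have hli : l ≠ i := by rintro rfl; exact hl.2 hxi1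
    rw [Finset.mem_erase]
    refine ⟨hli, ?_⟩
    rw [mem_frSet]
    by_cases h2 : l = j
    · subst h2; exact hxj
    · rwa [hx'l l hli h2] at hl
  · -- t = x j / w i, so x' j = 0
    right
    have hxj0 : x' j = 0 := by
      rw [hx'j, ht, he, div_mul_cancel₀ _ hwi.ne']
      ring
    intro l hl
    rw [mem_frSet] at hl
    have hlj : l ≠ j := by rintro rfl; exact hl.1 hxj0
    rw [Finset.mem_erase]
    refine ⟨hlj, ?_⟩
    rw [mem_frSet]
    by_cases h1 : l = i
    · subst h1; exact hxi
    · rwa [hx'l l h1 hlj] at hl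

private lemma round_aux {n : ℕ} (hn : 0 < n)
    (c w : Fin n → ℝ) (hc : ∀ j, 0 ≤ c j) (hw : ∀ j, 0 ≤ w j)
    (B : ℝ) (hB : 0 ≤ B) :
    ∀ k : ℕ, ∀ x : Fin n → ℝ, (∀ j, 0 ≤ x j) → (∀ j, x j ≤ 1) →
      (∑ j, w j * x j ≤ B) → (frSet x).card ≤ k →
      ∃ y : Fin n → ℝ, (∀ j, y j = 0 ∨ y j = 1) ∧ (∑ j, w j * y j ≤ B) ∧
        (∑ j, c j * x j) - Finset.univ.sup' ⟨⟨0, hn⟩, Finset.mem_univ _⟩ c ≤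
          ∑ j, c j * y j := by
  have hne : (Finset.univ : Finset (Fin n)).Nonempty := ⟨⟨0, hn⟩, Finset.mem_univ _⟩
  have hM : ∀ l, c l ≤ Finset.univ.sup' ⟨⟨0, hn⟩, Finset.mem_univ _⟩ c :=
    fun l => Finset.le_sup' c (Finset.mem_univ l)
  have hM0 : 0 ≤ Finset.univ.sup' ⟨⟨0, hn⟩, Finset.mem_univ _⟩ c :=
    le_trans (hc ⟨0, hn⟩) (hM ⟨0, hn⟩)
  intro k
  induction k with
  | zero =>
    intro x hx0 hx1 hxw hcard
    have hF : frSet x = ∅ := Finset.card_eq_zero.mp (Nat.le_zero.mp hcard)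
    refine ⟨x, ?_, hxw, by linarith⟩
    intro l
    have : l ∉ frSet x := by simp [hF]
    rw [mem_frSet] at this
    push_neg at this
    by_cases h : x l = 0
    · exact Or.inl h
    · exact Or.inr (this h)
  | succ k IH =>
    intro x hx0 hx1 hxw hcard
    by_cases hk : (frSet x).card ≤ k
    · exact IH x hx0 hx1 hxw hk
    push_neg at hk
    have hFpos : 0 < (frSet x).card := lt_of_le_of_lt (Nat.zero_le k) hk
    by_cases hz : ∃ i ∈ frSet x, w i = 0
    · -- zero-weight fractional coordinate: push it to 1
      obtain ⟨i, hiF, hwi⟩ := hz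
      set x' := Function.update x i 1 with hx'
      have hb0 : ∀ l, 0 ≤ x' l := by
        intro l; by_cases h : l = i
        · subst h; simp [hx']
        · rw [hx', Function.update_of_ne h]; exact hx0 l
      have hb1 : ∀ l, x' l ≤ 1 := by
        intro l; by_cases h : l = i
        · subst h; simp [hx']
        · rw [hx', Function.update_of_ne h]; exact hx1 l
      have hweq : ∑ l, w l * x' l = ∑ l, w l * x l := by
        rw [hx', sum_mul_update, hwi]; ring
      have hceq : ∑ l, c l * x l ≤ ∑ l, c l * x' l := by
        rw [hx', sum_mul_update]
        nlinarith [mul_nonneg (hc i) (sub_nonneg.mpr (hx1 i))]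
      have hsub : frSet x' ⊆ (frSet x).erase i := by
        intro l hl
        rw [mem_frSet] at hl
        have hli : l ≠ i := by
          rintro rfl; exact hl.2 (by simp [hx'])
        rw [Finset.mem_erase, mem_frSet]
        rw [hx', Function.update_of_ne hli] at hl
        exact ⟨hli, hl⟩
      have hcard' : (frSet x').card ≤ k := by
        have h1 : (frSet x').card ≤ ((frSet x).erase i).card := Finset.card_le_card hsub
        have h2 : ((frSet x).erase i).card = (frSet x).card - 1 :=
          Finset.card_erase_of_mem hiF
        omega
      obtain ⟨y, hy1, hy2, hy3⟩ := IH x' hb0 hb1 (hweq ▸ hxw) hcard'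
      exact ⟨y, hy1, hy2, by linarith⟩
    · push_neg at hz
      have hzpos : ∀ i ∈ frSet x, 0 < w i := fun i hi =>
        lt_of_le_of_ne (hw i) (Ne.symm (hz i hi))
      by_cases h2 : 1 < (frSet x).card
      · -- two fractional coordinates: exchange
        obtain ⟨i, hiF, j, hjF, hij⟩ := Finset.one_lt_card.mp h2
        have hxi := mem_frSet.mp hiF
        have hxj := mem_frSet.mp hjF
        have key : ∃ x' : Fin n → ℝ, (∀ l, 0 ≤ x' l) ∧ (∀ l, x' l ≤ 1) ∧
            (∑ l, w l * x' l = ∑ l, w l * x l) ∧ (∑ l, c l * x l ≤ ∑ l, c l * x' l) ∧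
            (frSet x').card ≤ k := by
          rcases le_total (c j * w i) (c i * w j) with hd | hd
          · obtain ⟨x', a1, a2, a3, a4, a5⟩ := exchange_step c w hc x hx0 hx1 i j hij
              hxi hxj (hzpos i hiF) (hzpos j hjF) hd
            refine ⟨x', a1, a2, a3, a4, ?_⟩
            rcases a5 with h | h
            · have := Finset.card_le_card h
              have := Finset.card_erase_of_mem hiF
              omega
            · have := Finset.card_le_card h
              have := Finset.card_erase_of_mem hjF
              omega
          · obtain ⟨x', a1, a2, a3, a4, a5⟩ := exchange_step c w hc x hx0 hx1 j i
              (Ne.symm hij) hxj hxi (hzpos j hjF) (hzpos i hiF) hd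
            refine ⟨x', a1, a2, a3, a4, ?_⟩
            rcases a5 with h | h
            · have := Finset.card_le_card h
              have := Finset.card_erase_of_mem hjF
              omega
            · have := Finset.card_le_card h
              have := Finset.card_erase_of_mem hiF
              omega
        obtain ⟨x', a1, a2, a3, a4, a5⟩ := key
        obtain ⟨y, hy1, hy2, hy3⟩ := IH x' a1 a2 (a3 ▸ hxw) a5
        exact ⟨y, hy1, hy2, by linarith⟩
      · -- exactly one fractional coordinate: round it down, losing at most max c
        have hc1 : (frSet x).card = 1 := by omega
        obtain ⟨i, hFi⟩ := Finset.card_eq_one.mp hc1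
        set y := Function.update x i 0 with hy
        have hbin : ∀ l, y l = 0 ∨ y l = 1 := by
          intro l
          by_cases h : l = i
          · subst h; left; simp [hy]
          · rw [hy, Function.update_of_ne h]
            have : l ∉ frSet x := by simp [hFi, h]
            rw [mem_frSet] at this
            push_neg at this
            by_cases h0 : x l = 0
            · exact Or.inl h0
            · exact Or.inr (this h0)
        have hweq : ∑ l, w l * y l = (∑ l, w l * x l) - w i * x i := by
          rw [hy, sum_mul_update]; ring
        have hceq : ∑ l, c l * y l = (∑ l, c l * x l) - c i * x i := by
          rw [hy, sum_mul_update]; ring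
        refine ⟨y, hbin, ?_, ?_⟩
        · rw [hweq]
          nlinarith [mul_nonneg (hw i) (hx0 i)]
        · rw [hceq]
          have h1 : c i * x i ≤ c i := by nlinarith [hc i, hx1 i]
          have := hM i
          linarith

/-- **Integrality gap for a single knapsack constraint.** For nonnegative profits `c`,
nonnegative weights `w` and budget `B ≥ 0`, every fractional assignment `x : Fin n → [0,1]`
with `∑ j, w j * x j ≤ B` can be rounded to a binary assignment `y` with `∑ j, w j * y j ≤ B`
and `∑ j, c j * y j ≥ ∑ j, c j * x j − max_j c j`. Hence (`K = 1`) the optimal integer profit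
is at most `max_j c j` below the optimal LP-relaxation profit. -/
theorem single_knapsack_integrality_gap
    {n : ℕ} (hn : 0 < n)
    (c w : Fin n → ℝ) (hc : ∀ j, 0 ≤ c j) (hw : ∀ j, 0 ≤ w j)
    (B : ℝ) (hB : 0 ≤ B)
    (x : Fin n → ℝ) (hx0 : ∀ j, 0 ≤ x j) (hx1 : ∀ j, x j ≤ 1)
    (hxw : ∑ j, w j * x j ≤ B) :
    ∃ y : Fin n → ℝ, (∀ j, y j = 0 ∨ y j = 1) ∧ (∑ j, w j * y j ≤ B) ∧
      (∑ j, c j * x j) - Finset.univ.sup' ⟨⟨0, hn⟩, Finset.mem_univ _⟩ c ≤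
        ∑ j, c j * y j := by
  exact round_aux hn c w hc hw B hB (frSet x).card x hx0 hx1 hxw le_rfl
end

section
/- Correctness of the candidate-value (intersection-point) search for synchronous coordinate descent. Fix a hierarchical family S_1, …, S_L ⊆ Fin M with integer capacities C_1, …, C_L ≥ 1 listed in a linear order extending strict inclusion, data p_j ≥ 0 and b_{j,k'} ≥ 0 (j ∈ Fin M, k' ∈ Fin K), a coordinate k, and fixed values λ_{k'} for k' ≠ k. For t ∈ ℝ define the adjusted profits z_j(t) = p_j − ∑_{k' ≠ k} λ_{k'} b_{j,k'} − t · b_{j,k}, each affine in t. Suppose the open interval (t₀, t₁) contains no t with z_j(t) = z_{j'}(t) for some j ≠ j' and no t with z_j(t) = 0 for some j. Then for any s, s' ∈ (t₀, t₁), any strict linear order ≺ refining the profile (z_j(s))_j also refines (z_j(s'))_j, and the greedy outputs computed at s and at s' (with the same set order and the same tie-breaking order ≺) coincide. Hence the greedy solution, as a function of λ_k, can only change value at pairwise intersection points of the lines z_j or at their zeros, so it suffices to screen these finitely many candidate values of λ_k. -/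
attribute [local instance] Classical.propDecidable

/-- A continuous function nonvanishing on an open interval keeps a constant sign there. -/
lemma sign_const_of_no_zero {g : ℝ → ℝ} (hg : Continuous g) {t₀ t₁ : ℝ}
    (hnz : ∀ t ∈ Set.Ioo t₀ t₁, g t ≠ 0) {s s' : ℝ}
    (hs : s ∈ Set.Ioo t₀ t₁) (hs' : s' ∈ Set.Ioo t₀ t₁) (h : 0 < g s) : 0 < g s' := by
  by_contra h'
  push_neg at h'
  have hsub : Set.uIcc s' s ⊆ Set.Ioo t₀ t₁ := Set.ordConnected_Ioo.uIcc_subset hs' hs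
  have := intermediate_value_uIcc (a := s') (b := s) (f := g) hg.continuousOn
  have h0 : (0 : ℝ) ∈ Set.uIcc (g s') (g s) := Set.mem_uIcc.2 (Or.inl ⟨h', le_of_lt h⟩)
  obtain ⟨t, ht, hgt⟩ := this h0
  exact hnz t (hsub ht) hgt

/-- **Correctness of the candidate-value (intersection-point) search for SCD.** With the
adjusted profits `z t j = p j − ∑_{k' ≠ k} λ_{k'} b j k' − t * b j k` affine in the coordinate
`t = λ_k`, if the open interval `(t₀, t₁)` contains no pairwise intersection point of the lines
`z · j` and no zero of any of them, then for any `s, s'` in the interval, a strict linear order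
`≺` refining `(z s j)_j` also refines `(z s' j)_j`, and the greedy outputs computed at `s` and
`s'` (same set order, same tie-breaking order) coincide. -/
theorem scd_candidate_value_correctness
    {M L K : ℕ} (hM : 0 < M) (hL : 0 < L) (hK : 0 < K)
    (S : Fin L → Finset (Fin M)) (C : Fin L → ℕ) (hC : ∀ l, 1 ≤ C l)
    (hlaminar : ∀ l l' : Fin L, (S l ∩ S l').Nonempty → S l ⊆ S l' ∨ S l' ⊆ S l)
    (horder : ∀ a b : Fin L, S a ⊂ S b → a < b)
    (p : Fin M → ℝ) (hp : ∀ j, 0 ≤ p j)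
    (b : Fin M → Fin K → ℝ) (hb : ∀ j k', 0 ≤ b j k')
    (k : Fin K) (lam : Fin K → ℝ)
    (z : ℝ → Fin M → ℝ)
    (hz : ∀ (t : ℝ) (j : Fin M),
      z t j = p j - ∑ k' ∈ Finset.univ.erase k, lam k' * b j k' - t * b j k)
    (t₀ t₁ : ℝ)
    (hsep : ∀ t ∈ Set.Ioo t₀ t₁,
      (∀ j j' : Fin M, j ≠ j' → z t j ≠ z t j') ∧ (∀ j : Fin M, z t j ≠ 0))
    (s s' : ℝ) (hs : s ∈ Set.Ioo t₀ t₁) (hs' : s' ∈ Set.Ioo t₀ t₁)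
    (r : Fin M → Fin M → Prop) (hr : IsStrictTotalOrder (Fin M) r)
    (hrefine : ∀ j j' : Fin M, z s j > z s j' → r j j') :
    (∀ j j' : Fin M, z s' j > z s' j' → r j j') ∧
    greedyOutput r S C (z s) = greedyOutput r S C (z s') := by
  have hcont : ∀ j, Continuous (fun t => z t j) := by
    intro j
    have heq : (fun t => z t j) =
        fun t => p j - ∑ k' ∈ Finset.univ.erase k, lam k' * b j k' - t * b j k :=
      funext fun t => hz t j
    rw [heq]
    continuity
  have hsign : ∀ j, (0 < z s j ↔ 0 < z s' j) := by
    intro j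
    constructor
    · exact fun h => sign_const_of_no_zero (hcont j) (fun t ht => (hsep t ht).2 j) hs hs' h
    · exact fun h => sign_const_of_no_zero (hcont j) (fun t ht => (hsep t ht).2 j) hs' hs h
  have hord : ∀ j j', z s' j > z s' j' → z s j > z s j' := by
    intro j j' h
    have hne : j ≠ j' := by rintro rfl; exact lt_irrefl _ h
    have hc : Continuous (fun t => z t j - z t j') := (hcont j).sub (hcont j')
    have := sign_const_of_no_zero hc
      (fun t ht hzero => (hsep t ht).1 j j' hne (by linarith [sub_eq_zero.mp hzero]))
      hs' hs (by simpa using sub_pos.mpr h)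
    linarith
  refine ⟨fun j j' h => hrefine j j' (hord j j' h), ?_⟩
  have hsets : ∀ n, greedySets r S C (z s) n = greedySets r S C (z s') n := by
    intro n
    induction n with
    | zero =>
      simp only [greedySets]
      apply Finset.filter_congr
      intro j _
      exact hsign j
    | succ n ih => simp only [greedySets, ih]
  unfold greedyOutput
  rw [hsets L]
end
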